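/- arXiv:1208.4072 — 2 statements merged into one kernel-verified Lean document; each statement's English description precedes it below -/
import Mathlib

section
/- Let A be a unital C*-algebra and μ a state on A. The standard deviation σ^μ(a) = max(‖a − μ(a)‖_μ, ‖a* − μ(a*)‖_μ) is a Leibniz *-seminorm: σ^μ(a*) = σ^μ(a), σ^μ(1) = 0, and σ^μ(ab) ≤ σ^μ(a)‖b‖ + ‖a‖σ^μ(b). -/
/-!
The form `⟨x, y⟩ = μ(x⋆ y)` makes `A` a pre-Hilbert space (the GNS space of `μ`), in which
`‖x‖_μ` is the norm, left multiplication by `a` has norm at most `‖a‖`, and `1` is a unit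
vector with `⟨1, x⟩ = μ(x)`. Hence `x - μ(x) 1` is the orthogonal projection of `x` onto
`1⊥`, so `‖x - μ(x) 1‖_μ ≤ ‖x - c 1‖_μ` for every scalar `c`. Taking `c = μ(a) μ(b)` and
writing `ab - μ(a) μ(b) 1 = a (b - μ(b) 1) + μ(b) (a - μ(a) 1)` gives the Leibniz
inequality for `a ↦ ‖a - μ(a) 1‖_μ`; applying it to `b⋆ a⋆` as well gives it for `σ^μ`.
-/

open scoped ComplexOrder InnerProductSpace

/-- The standard deviation σ^μ(a) = max(‖a − μ(a)1‖_μ, ‖a* − conj(μ(a))1‖_μ) with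
respect to a state μ on a unital C*-algebra, where ‖c‖_μ = μ(c*c)^{1/2}. -/
noncomputable def stdDev {A : Type*} [NormedRing A] [StarRing A] [CStarRing A]
    [NormedAlgebra ℂ A] [StarModule ℂ A] (μ : A →ₗ[ℂ] ℂ) (a : A) : ℝ :=
  max (Real.sqrt (μ (star (a - μ a • 1) * (a - μ a • 1))).re)
    (Real.sqrt (μ (star (star a - (starRingEnd ℂ) (μ a) • 1) *
      (star a - (starRingEnd ℂ) (μ a) • 1))).re)

namespace PositiveLinearMap

variable {A : Type*} [CStarAlgebra A] [PartialOrder A] [StarOrderedRing A]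

def ofMapStarMulSelfNonneg (μ : A →ₗ[ℂ] ℂ) (hμ : ∀ a, 0 ≤ μ (star a * a)) :
    A →ₚ[ℂ] ℂ where
  toLinearMap := μ
  monotone' x y hxy := by
    obtain ⟨b, hb⟩ := CStarAlgebra.nonneg_iff_eq_star_mul_self.mp (sub_nonneg.mpr hxy)
    have := hμ b
    rwa [← hb, map_sub, sub_nonneg] at this

variable (f : A →ₚ[ℂ] ℂ)

lemma norm_toPreGNS_mul_le (a x : A) : ‖f.toPreGNS (a * x)‖ ≤ ‖a‖ * ‖f.toPreGNS x‖ :=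
  (f.leftMulMapPreGNS a).le_of_opNorm_le
    (LinearMap.mkContinuous_norm_le _ (norm_nonneg a) _) (f.toPreGNS x)

lemma inner_toPreGNS_one_left (x : A) : ⟪f.toPreGNS 1, f.toPreGNS x⟫_ℂ = f x := by
  simp [preGNS_inner_def]

noncomputable def deviation (a : A) : ℝ := ‖f.toPreGNS (a - f a • 1)‖

lemma stdDev_eq_max_deviation (a : A) :
    stdDev f.toLinearMap a = max (f.deviation a) (f.deviation (star a)) := by
  rw [stdDev, deviation, deviation, preGNS_norm_def, preGNS_norm_def, map_star]
  rfl

lemma stdDev_star (a : A) : stdDev f.toLinearMap (star a) = stdDev f.toLinearMap a := by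
  rw [stdDev_eq_max_deviation, stdDev_eq_max_deviation, star_star, max_comm]

variable {f} (hf : f 1 = 1)
include hf

lemma norm_toPreGNS_one : ‖f.toPreGNS (1 : A)‖ = 1 := by
  simp [preGNS_norm_def, hf]

lemma norm_apply_le_norm_toPreGNS (x : A) : ‖f x‖ ≤ ‖f.toPreGNS x‖ := by
  simpa [inner_toPreGNS_one_left, norm_toPreGNS_one hf] using
    norm_inner_le_norm (𝕜 := ℂ) (f.toPreGNS 1) (f.toPreGNS x)

lemma norm_toPreGNS_le (x : A) : ‖f.toPreGNS x‖ ≤ ‖x‖ := by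
  simpa [norm_toPreGNS_one hf] using f.norm_toPreGNS_mul_le x 1

lemma norm_apply_le (x : A) : ‖f x‖ ≤ ‖x‖ :=
  (norm_apply_le_norm_toPreGNS hf x).trans (norm_toPreGNS_le hf x)

lemma deviation_le (a : A) (c : ℂ) : f.deviation a ≤ ‖f.toPreGNS (a - c • 1)‖ := by
  have hsplit :
      f.toPreGNS (a - c • 1) = f.toPreGNS ((f a - c) • 1) + f.toPreGNS (a - f a • 1) := by
    rw [← map_add, sub_smul]
    congr 1
    abel
  have horth : ⟪f.toPreGNS ((f a - c) • 1), f.toPreGNS (a - f a • 1)⟫_ℂ = 0 := by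
    rw [map_smul, inner_smul_left, inner_toPreGNS_one_left]
    simp [hf]
  have hpyth := norm_add_sq_eq_norm_sq_add_norm_sq_of_inner_eq_zero _ _ horth
  rw [← hsplit] at hpyth
  rw [deviation, mul_self_le_mul_self_iff (norm_nonneg _) (norm_nonneg _), hpyth]
  exact le_add_of_nonneg_left (mul_self_nonneg _)

lemma deviation_one : f.deviation 1 = 0 := by
  simp [deviation, hf]

lemma deviation_mul_le (a b : A) :
    f.deviation (a * b) ≤ ‖a‖ * f.deviation b + ‖b‖ * f.deviation a := by
  have hsplit : a * b - (f a * f b) • 1 = a * (b - f b • 1) + f b • (a - f a • 1) := by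
    rw [mul_sub, smul_sub, smul_smul, mul_smul_comm, mul_one, mul_comm (f b)]
    abel
  calc f.deviation (a * b) ≤ ‖f.toPreGNS (a * b - (f a * f b) • 1)‖ := deviation_le hf _ _
    _ = ‖f.toPreGNS (a * (b - f b • 1)) + f b • f.toPreGNS (a - f a • 1)‖ := by
      rw [hsplit, map_add, map_smul]
    _ ≤ ‖a‖ * f.deviation b + ‖f b‖ * f.deviation a :=
      (norm_add_le _ _).trans (add_le_add (f.norm_toPreGNS_mul_le _ _) (norm_smul _ _).le)
    _ ≤ ‖a‖ * f.deviation b + ‖b‖ * f.deviation a := by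
      gcongr
      · exact norm_nonneg _
      · exact norm_apply_le hf b

lemma stdDev_one : stdDev f.toLinearMap (1 : A) = 0 := by
  simp [stdDev_eq_max_deviation, deviation_one hf]

lemma stdDev_mul_le (a b : A) :
    stdDev f.toLinearMap (a * b) ≤
      stdDev f.toLinearMap a * ‖b‖ + ‖a‖ * stdDev f.toLinearMap b := by
  simp only [stdDev_eq_max_deviation, star_mul]
  refine max_le ((deviation_mul_le hf a b).trans ?_) ((deviation_mul_le hf _ _).trans ?_)
  · rw [add_comm, mul_comm ‖b‖]
    gcongr <;> exact le_max_left _ _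
  · rw [norm_star, norm_star, mul_comm ‖b‖]
    gcongr <;> exact le_max_right _ _

end PositiveLinearMap

/-- For a state μ on a unital C*-algebra, the standard deviation σ^μ is a Leibniz
*-seminorm: σ^μ(a*) = σ^μ(a), σ^μ(1) = 0, and σ^μ(ab) ≤ σ^μ(a)‖b‖ + ‖a‖σ^μ(b). -/
theorem stdDev_leibniz_star_seminorm {A : Type*} [NormedRing A] [StarRing A]
    [CStarRing A] [NormedAlgebra ℂ A] [StarModule ℂ A] [CompleteSpace A]
    (μ : A →ₗ[ℂ] ℂ) (hpos : ∀ a : A, 0 ≤ μ (star a * a)) (hone : μ 1 = 1) :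
    (∀ a : A, stdDev μ (star a) = stdDev μ a) ∧
      stdDev μ (1 : A) = 0 ∧
      ∀ a b : A, stdDev μ (a * b) ≤ stdDev μ a * ‖b‖ + ‖a‖ * stdDev μ b := by
  let _ : CStarAlgebra A := {}
  let _ := CStarAlgebra.spectralOrder A
  have _ := CStarAlgebra.spectralOrderedRing A
  let f := PositiveLinearMap.ofMapStarMulSelfNonneg μ hpos
  have hf : f 1 = 1 := hone
  exact ⟨f.stdDev_star, PositiveLinearMap.stdDev_one hf, PositiveLinearMap.stdDev_mul_le hf⟩
end

section
/- Let E : A → D be a conditional expectation. Then L̃₀(a) = ‖a − E(a)‖_E is a Leibniz seminorm on A: L̃₀(ab) ≤ ‖a‖ L̃₀(b) + L̃₀(a) ‖b‖ and L̃₀(1) = 0. -/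
/-!
Write `⟪x, y⟫ = E (x⋆ y)`, a `D`-valued semi-inner product on `A` for which `‖x‖_E` is the
associated seminorm; as for Hilbert C⋆-modules, it satisfies the Cauchy–Schwarz inequality and
hence the triangle inequality. Then

  `ab − E(ab) = (a(b − Eb) − E(a(b − Eb))) + (a − Ea) Eb`,

and the two summands are bounded using `‖y − Ey‖_E ≤ ‖y‖_E` (Pythagoras:
`E((y − Ey)⋆(y − Ey)) = E(y⋆y) − (Ey)⋆Ey`), `‖ay‖_E ≤ ‖a‖ ‖y‖_E` (positivity of `E`),
`‖zd‖_E ≤ ‖z‖_E ‖d‖` for `d ∈ D` (the bimodule property) and `‖Eb‖ ≤ ‖b‖`.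
-/

/-- The norm ‖x‖_E = ‖E(x*x)‖^{1/2} associated to a map E on a C*-algebra. -/
noncomputable def normE {A : Type*} [NormedRing A] [StarRing A] [CStarRing A]
    [NormedAlgebra ℂ A] [StarModule ℂ A] (E : A →ₗ[ℂ] A) (x : A) : ℝ :=
  Real.sqrt ‖E (star x * x)‖

lemma map_nonneg_of_forall_map_star_mul_self_nonneg {R M F : Type*} [NonUnitalSemiring R]
    [PartialOrder R] [StarRing R] [StarOrderedRing R] [AddCommMonoid M] [PartialOrder M]
    [IsOrderedAddMonoid M] [FunLike F R M] [AddMonoidHomClass F R M] (f : F)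
    (hf : ∀ s, 0 ≤ f (star s * s)) {x : R} (hx : 0 ≤ x) : 0 ≤ f x := by
  rw [StarOrderedRing.nonneg_iff] at hx
  induction hx using AddSubmonoid.closure_induction with
  | mem _ h => obtain ⟨s, rfl⟩ := h; exact hf s
  | zero => simp
  | add _ _ _ _ h₁ h₂ => rw [map_add]; exact add_nonneg h₁ h₂

-- `p = ‖E (x⋆ x)‖` may vanish for `x ≠ 0` (`E` need not be faithful), so `t = p⁻¹` cannot
-- always be used.
lemma le_mul_of_forall_two_mul_sub_sq_mul_le {p c q : ℝ} (hp : 0 ≤ p)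
    (h : ∀ t : ℝ, 0 ≤ 2 * t - t ^ 2 * p → (2 * t - t ^ 2 * p) * c ≤ q) : c ≤ p * q := by
  have hq : 0 ≤ q := by simpa using h 0
  rcases hp.eq_or_lt with rfl | hp
  · by_contra! hc
    rw [zero_mul] at hc
    have := h ((q + 1) / (2 * c)) (by simp only [mul_zero, sub_zero]; positivity)
    rw [mul_zero, sub_zero, show 2 * ((q + 1) / (2 * c)) * c = q + 1 by field_simp] at this
    linarith
  · have := h p⁻¹ (by field_simp; linarith)
    rwa [show (2 * p⁻¹ - p⁻¹ ^ 2 * p) * c = c / p by field_simp; ring, div_le_iff₀' hp] at this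

section normE

variable {A : Type*} [NormedRing A] [StarRing A] [CStarRing A] [NormedAlgebra ℂ A]
  [StarModule ℂ A] (E : A →ₗ[ℂ] A)

lemma normE_nonneg (x : A) : 0 ≤ normE E x := Real.sqrt_nonneg _

lemma sq_normE (x : A) : normE E x ^ 2 = ‖E (star x * x)‖ := Real.sq_sqrt (norm_nonneg _)

lemma normE_le_mul_of_le {x y : A} {c : ℝ} (hc : 0 ≤ c)
    (h : ‖E (star x * x)‖ ≤ c ^ 2 * ‖E (star y * y)‖) : normE E x ≤ c * normE E y := by
  rw [normE, normE, ← Real.sqrt_sq hc, ← Real.sqrt_mul (sq_nonneg c)]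
  exact Real.sqrt_le_sqrt h

end normE

namespace PositiveLinearMap

section StarAlgebra

variable {A : Type*} [Ring A] [StarRing A] [Algebra ℂ A] [StarModule ℂ A] [PartialOrder A]

structure IsConditionalExpectation (E : A →ₚ[ℂ] A) (D : StarSubalgebra ℂ A) : Prop where
  apply_mem : ∀ a, E a ∈ D
  apply_of_mem : ∀ d ∈ D, E d = d
  apply_mul_mul : ∀ c ∈ D, ∀ d ∈ D, ∀ a, E (c * a * d) = c * E a * d

namespace IsConditionalExpectation

variable {E : A →ₚ[ℂ] A} {D : StarSubalgebra ℂ A}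

lemma apply_one (hE : E.IsConditionalExpectation D) : E 1 = 1 := hE.apply_of_mem 1 D.one_mem

lemma apply_mul_left (hE : E.IsConditionalExpectation D) {d : A} (hd : d ∈ D) (x : A) :
    E (d * x) = d * E x := by
  simpa using hE.apply_mul_mul d hd 1 D.one_mem x

lemma apply_mul_right (hE : E.IsConditionalExpectation D) (x : A) {d : A} (hd : d ∈ D) :
    E (x * d) = E x * d := by
  simpa using hE.apply_mul_mul 1 D.one_mem d hd x

end IsConditionalExpectation

end StarAlgebra

variable {A : Type*} [CStarAlgebra A] [PartialOrder A]

namespace IsConditionalExpectation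

variable {E : A →ₚ[ℂ] A} {D : StarSubalgebra ℂ A}

lemma normE_one_sub_apply_one (hE : E.IsConditionalExpectation D) :
    normE E.toLinearMap (1 - E 1) = 0 := by
  simp [normE, hE.apply_one]

lemma normE_mul_le_of_mem (hE : E.IsConditionalExpectation D) (z : A) {d : A} (hd : d ∈ D) :
    normE E.toLinearMap (z * d) ≤ normE E.toLinearMap z * ‖d‖ := by
  rw [mul_comm _ ‖d‖]
  refine normE_le_mul_of_le _ (norm_nonneg d) ?_
  have hexp : star (z * d) * (z * d) = star d * (star z * z) * d := by
    simp only [star_mul, mul_assoc]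
  calc ‖E (star (z * d) * (z * d))‖ = ‖star d * E (star z * z) * d‖ := by
        rw [hexp, hE.apply_mul_mul _ (star_mem hd) _ hd]
    _ ≤ ‖star d‖ * ‖E (star z * z)‖ * ‖d‖ := norm_mul₃_le
    _ = ‖d‖ ^ 2 * ‖E (star z * z)‖ := by rw [norm_star]; ring

end IsConditionalExpectation

variable [StarOrderedRing A]

lemma normE_mul_le (E : A →ₚ[ℂ] A) (a y : A) :
    normE E.toLinearMap (a * y) ≤ ‖a‖ * normE E.toLinearMap y := by
  refine normE_le_mul_of_le _ (norm_nonneg a) ?_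
  have hle : star (a * y) * (a * y) ≤ ‖a‖ ^ 2 • (star y * y) := by
    rw [star_mul, mul_assoc, ← mul_assoc (star a), ← mul_assoc, sq,
      ← CStarRing.norm_star_mul_self]
    exact CStarAlgebra.star_left_conjugate_le_norm_smul
  calc ‖E (star (a * y) * (a * y))‖ ≤ ‖E (‖a‖ ^ 2 • (star y * y))‖ :=
        CStarAlgebra.norm_le_norm_of_nonneg_of_le (E.map_nonneg (star_mul_self_nonneg _))
          (E.monotone' hle)
    _ = ‖a‖ ^ 2 * ‖E (star y * y)‖ := by
        rw [E.map_smul_of_tower, norm_smul, Real.norm_of_nonneg (sq_nonneg _)]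

namespace IsConditionalExpectation

variable {E : A →ₚ[ℂ] A} {D : StarSubalgebra ℂ A}

lemma apply_star_sub_mul_mul_sub (hE : E.IsConditionalExpectation D) (x y : A) {d : A}
    (hd : d ∈ D) :
    E (star (y - x * d) * (y - x * d)) = E (star y * y) - star (E (star x * y)) * d
      - star d * E (star x * y) + star d * E (star x * x) * d := by
  have hexp : star (y - x * d) * (y - x * d) = star y * y - star (star x * y) * d
      - star d * (star x * y) + star d * (star x * x) * d := by
    simp only [star_sub, star_mul, star_star]; noncomm_ring
  rw [hexp, map_add, map_sub, map_sub, hE.apply_mul_right _ hd, map_star,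
    hE.apply_mul_left (star_mem hd), hE.apply_mul_mul _ (star_mem hd) _ hd]

lemma apply_star_sub_apply_mul_sub_apply (hE : E.IsConditionalExpectation D) (x : A) :
    E (star (x - E x) * (x - E x)) = E (star x * x) - star (E x) * E x := by
  have hxD := hE.apply_mem x
  simpa [hE.apply_of_mem _ (mul_mem (star_mem hxD) hxD), hE.apply_one]
    using hE.apply_star_sub_mul_mul_sub 1 x hxD

/-- Expansion of `0 ≤ E ((y - x (t z))⋆ (y - x (t z)))` for `z = E (x⋆ y)`. -/
lemma two_mul_sub_sq_mul_smul_le (hE : E.IsConditionalExpectation D) (x y : A) (t : ℝ) :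
    (2 * t - t ^ 2 * ‖E (star x * x)‖) • (star (E (star x * y)) * E (star x * y))
      ≤ E (star y * y) := by
  set z := E (star x * y)
  have htz : t • z ∈ D := by
    simpa [← Complex.coe_smul] using D.smul_mem (hE.apply_mem (star x * y)) (t : ℂ)
  have hpos : 0 ≤ E (star y * y) - (2 * t) • (star z * z)
      + t ^ 2 • (star z * E (star x * x) * z) := by
    convert E.map_nonneg (star_mul_self_nonneg (y - x * (t • z))) using 1
    rw [hE.apply_star_sub_mul_mul_sub x y htz]
    simp only [star_smul, star_trivial, smul_mul_assoc, mul_smul_comm, smul_smul]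
    module
  have hconj : t ^ 2 • (star z * E (star x * x) * z)
      ≤ (t ^ 2 * ‖E (star x * x)‖) • (star z * z) := by
    rw [mul_smul]
    exact smul_le_smul_of_nonneg_left CStarAlgebra.star_left_conjugate_le_norm_smul
      (sq_nonneg t)
  rw [sub_smul]
  calc (2 * t) • (star z * z) - (t ^ 2 * ‖E (star x * x)‖) • (star z * z)
      ≤ (2 * t) • (star z * z) - t ^ 2 • (star z * E (star x * x) * z) :=
        sub_le_sub_left hconj _
    _ ≤ E (star y * y) := by
        rw [← sub_nonneg]
        convert hpos using 1
        abel

lemma norm_apply_star_mul_le (hE : E.IsConditionalExpectation D) (x y : A) :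
    ‖E (star x * y)‖ ≤ normE E.toLinearMap x * normE E.toLinearMap y := by
  have hquad (t : ℝ) (ht : 0 ≤ 2 * t - t ^ 2 * ‖E (star x * x)‖) :
      (2 * t - t ^ 2 * ‖E (star x * x)‖) * ‖E (star x * y)‖ ^ 2 ≤ ‖E (star y * y)‖ := by
    calc (2 * t - t ^ 2 * ‖E (star x * x)‖) * ‖E (star x * y)‖ ^ 2
        = ‖(2 * t - t ^ 2 * ‖E (star x * x)‖) • (star (E (star x * y)) * E (star x * y))‖ := by
          rw [norm_smul, Real.norm_of_nonneg ht, CStarRing.norm_star_mul_self, ← sq]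
      _ ≤ ‖E (star y * y)‖ := CStarAlgebra.norm_le_norm_of_nonneg_of_le
          (smul_nonneg ht (star_mul_self_nonneg _)) (hE.two_mul_sub_sq_mul_smul_le x y t)
  have hsq : ‖E (star x * y)‖ ^ 2 ≤ (normE E.toLinearMap x * normE E.toLinearMap y) ^ 2 := by
    rw [mul_pow, sq_normE, sq_normE]
    exact le_mul_of_forall_two_mul_sub_sq_mul_le (norm_nonneg _) hquad
  exact le_of_pow_le_pow_left₀ two_ne_zero
    (mul_nonneg (normE_nonneg _ _) (normE_nonneg _ _)) hsq

lemma normE_add_le (hE : E.IsConditionalExpectation D) (u v : A) :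
    normE E.toLinearMap (u + v) ≤ normE E.toLinearMap u + normE E.toLinearMap v := by
  refine le_of_pow_le_pow_left₀ two_ne_zero (add_nonneg (normE_nonneg _ _) (normE_nonneg _ _)) ?_
  rw [sq_normE]
  calc ‖E (star (u + v) * (u + v))‖
      ≤ ‖E (star u * u)‖ + ‖E (star u * v)‖ + (‖E (star v * u)‖ + ‖E (star v * v)‖) := by
        rw [star_add, add_mul, mul_add, mul_add, map_add, map_add, map_add]
        exact (norm_add_le _ _).trans (add_le_add (norm_add_le _ _) (norm_add_le _ _))
    _ ≤ normE E.toLinearMap u ^ 2 + normE E.toLinearMap u * normE E.toLinearMap v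
        + (normE E.toLinearMap v * normE E.toLinearMap u + normE E.toLinearMap v ^ 2) := by
        gcongr
        · exact (sq_normE _ u).ge
        · exact hE.norm_apply_star_mul_le u v
        · exact hE.norm_apply_star_mul_le v u
        · exact (sq_normE _ v).ge
    _ = (normE E.toLinearMap u + normE E.toLinearMap v) ^ 2 := by ring

lemma normE_sub_apply_le (hE : E.IsConditionalExpectation D) (x : A) :
    normE E.toLinearMap (x - E x) ≤ normE E.toLinearMap x := by
  refine Real.sqrt_le_sqrt <| CStarAlgebra.norm_le_norm_of_nonneg_of_le
    (E.map_nonneg (star_mul_self_nonneg _)) ?_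
  rw [coe_toLinearMap, hE.apply_star_sub_apply_mul_sub_apply]
  exact sub_le_self _ (star_mul_self_nonneg _)

lemma norm_apply_le (hE : E.IsConditionalExpectation D) (b : A) : ‖E b‖ ≤ ‖b‖ := by
  nontriviality A
  have hschwarz : star (E b) * E b ≤ E (star b * b) := by
    rw [← sub_nonneg, ← hE.apply_star_sub_apply_mul_sub_apply]
    exact E.map_nonneg (star_mul_self_nonneg _)
  have hnorm : ‖E (star b * b)‖ ≤ ‖star b * b‖ := by
    simpa [hE.apply_one] using E.norm_apply_le_of_nonneg _ (star_mul_self_nonneg b)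
  refine le_of_pow_le_pow_left₀ two_ne_zero (norm_nonneg b) ?_
  rw [sq, sq, ← CStarRing.norm_star_mul_self, ← CStarRing.norm_star_mul_self]
  exact (CStarAlgebra.norm_le_norm_of_nonneg_of_le (star_mul_self_nonneg _) hschwarz).trans hnorm

lemma normE_mul_sub_apply_le (hE : E.IsConditionalExpectation D) (a b : A) :
    normE E.toLinearMap (a * b - E (a * b))
      ≤ ‖a‖ * normE E.toLinearMap (b - E b) + normE E.toLinearMap (a - E a) * ‖b‖ := by
  have hdecomp : a * b - E (a * b)
      = (a * (b - E b) - E (a * (b - E b))) + (a - E a) * E b := by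
    rw [mul_sub a, map_sub, hE.apply_mul_right _ (hE.apply_mem b)]
    noncomm_ring
  rw [hdecomp]
  refine (hE.normE_add_le _ _).trans (add_le_add ?_ ?_)
  · exact (hE.normE_sub_apply_le _).trans (E.normE_mul_le _ _)
  · exact (hE.normE_mul_le_of_mem _ (hE.apply_mem b)).trans
      (mul_le_mul_of_nonneg_left (hE.norm_apply_le b) (normE_nonneg _ _))

end IsConditionalExpectation

end PositiveLinearMap

/-- For a conditional expectation E : A → D, the quotient seminorm
L̃₀(a) = ‖a − E(a)‖_E is Leibniz: L̃₀(1) = 0 and L̃₀(ab) ≤ ‖a‖L̃₀(b) + L̃₀(a)‖b‖. -/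
theorem condExp_quotient_leibniz {A : Type*} [NormedRing A] [StarRing A]
    [CStarRing A] [NormedAlgebra ℂ A] [StarModule ℂ A] [CompleteSpace A]
    [PartialOrder A] [StarOrderedRing A]
    (D : StarSubalgebra ℂ A)
    (E : A →ₗ[ℂ] A) (hrange : ∀ a, E a ∈ D) (hproj : ∀ d ∈ D, E d = d)
    (hpos : ∀ a : A, 0 ≤ E (star a * a))
    (hbimod : ∀ c ∈ D, ∀ d ∈ D, ∀ a : A, E (c * a * d) = c * E a * d) :
    normE E ((1 : A) - E 1) = 0 ∧
      ∀ a b : A, normE E (a * b - E (a * b)) ≤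
        ‖a‖ * normE E (b - E b) + normE E (a - E a) * ‖b‖ := by
  let _ : CStarAlgebra A := {}
  let Epos : A →ₚ[ℂ] A :=
    .mk₀ E fun _ => map_nonneg_of_forall_map_star_mul_self_nonneg E hpos
  have hE : Epos.IsConditionalExpectation D := ⟨hrange, hproj, hbimod⟩
  exact ⟨hE.normE_one_sub_apply_one, hE.normE_mul_sub_apply_le⟩
end
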